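/- Let T = ν T' be an unnormalized stochastic channel on d×d complex matrices with parameters ν, λ ∈ [0,1]. Then ‖T − id_d‖_◇ ≤ 1 + ν − 2νλ. -/

import Mathlib

open scoped Kronecker ComplexOrder
open Matrix

/-- The positive semidefinite square root of a positive semidefinite matrix
(junk value `0` on matrices that are not positive semidefinite). -/
noncomputable def psdSqrt {n : Type*} [Fintype n] [DecidableEq n] (A : Matrix n n ℂ) :
    Matrix n n ℂ :=
  letI := Classical.propDecidable A.PosSemidef
  if h : A.PosSemidef then
    h.1.eigenvectorUnitary.1 * diagonal ((↑) ∘ (√·) ∘ h.1.eigenvalues) *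
      (star h.1.eigenvectorUnitary : Matrix n n ℂ) else 0

/-- The trace norm `‖A‖₁ = tr √(A Aᴴ)`. -/
noncomputable def traceNorm {n : Type*} [Fintype n] [DecidableEq n] (A : Matrix n n ℂ) : ℝ :=
  (psdSqrt (A * Aᴴ)).trace.re

/-- The fidelity `F(A,B) = ‖√A √B‖₁²` between positive semidefinite matrices. -/
noncomputable def fidelity {n : Type*} [Fintype n] [DecidableEq n] (A B : Matrix n n ℂ) : ℝ :=
  traceNorm (psdSqrt A * psdSqrt B) ^ 2

/-- The Choi matrix `J(Φ) = (1/n) Σ_{j,k} E_{jk} ⊗ Φ(E_{jk})` of a map on matrices. -/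
noncomputable def choi {n m : Type*} [Fintype n] [DecidableEq n] [Fintype m]
    (Φ : Matrix n n ℂ → Matrix m m ℂ) : Matrix (n × m) (n × m) ℂ :=
  (Fintype.card n : ℂ)⁻¹ • ∑ j : n, ∑ k : n,
    (Matrix.single j k (1 : ℂ)) ⊗ₖ Φ (Matrix.single j k (1 : ℂ))

/-- The extension `(id_F ⊗ Φ)` of a map on matrices by an ancilla of dimension `F`. -/
def tensorExt (F : ℕ) {n m : Type*} (Φ : Matrix n n ℂ → Matrix m m ℂ)
    (ρ : Matrix (Fin F × n) (Fin F × n) ℂ) : Matrix (Fin F × m) (Fin F × m) ℂ :=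
  Matrix.of fun p q => Φ (Matrix.of fun i j => ρ (p.1, i) (q.1, j)) p.2 q.2

/-- The diamond norm `‖Φ‖◇`: the supremum of `‖(id_F ⊗ Φ)(ρ)‖₁` over all finite ancilla
dimensions `F` and density matrices `ρ`. -/
noncomputable def diamondNorm {n m : Type*} [Fintype n] [DecidableEq n] [Fintype m]
    [DecidableEq m] (Φ : Matrix n n ℂ → Matrix m m ℂ) : ℝ :=
  sSup { x : ℝ | ∃ (F : ℕ) (ρ : Matrix (Fin F × n) (Fin F × n) ℂ),
    ρ.PosSemidef ∧ ρ.trace = 1 ∧ x = traceNorm (tensorExt F Φ ρ) }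

/-! Splitting off the Kraus operator `B 0 = √λ I` gives `T - id = ν Φ - (1 - νλ) id`, where `Φ` is
the completely positive map with Kraus operators `B 1, …, B K`; trace preservation of `T'` makes
`Φ` multiply traces by `1 - λ`. On a state `ρ` of system and ancilla, `(id ⊗ (T - id)) ρ` is thus a
difference `P - Q` of positive matrices, and `‖P - Q‖₁ ≤ tr P + tr Q = ν (1 - λ) + (1 - νλ)`. -/

section TraceNorm

open scoped MatrixOrder

variable {n : Type*} [Fintype n] [DecidableEq n]

lemma psdSqrt_eq_sqrt {A : Matrix n n ℂ} (hA : A.PosSemidef) : psdSqrt A = CFC.sqrt A := by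
  rw [psdSqrt, dif_pos hA, CFC.sqrt_eq_cfc, cfc_nnreal_eq_real _ A, hA.1.cfc_eq]
  simp only [IsHermitian.cfc, Unitary.conjStarAlgAut_apply]
  congr 3
  funext i
  simp [Real.coe_sqrt, Real.coe_toNNReal', hA.eigenvalues_nonneg i]

lemma Matrix.IsHermitian.traceNorm_eq_re_trace_abs {X : Matrix n n ℂ} (hX : X.IsHermitian) :
    traceNorm X = (CFC.abs X).trace.re := by
  rw [traceNorm, psdSqrt_eq_sqrt (posSemidef_self_mul_conjTranspose X), CFC.abs,
    star_eq_conjTranspose, hX.eq]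

lemma Matrix.trace_mul_nonneg {A B : Matrix n n ℂ} (hA : 0 ≤ A) (hB : 0 ≤ B) :
    0 ≤ (A * B).trace := by
  have h : (A * B).trace = (CFC.sqrt B * A * CFC.sqrt B).trace := by
    conv_lhs => rw [← CFC.sqrt_mul_sqrt_self B hB]
    rw [← mul_assoc, trace_mul_cycle]
  rw [h]
  exact (conjugate_nonneg_of_nonneg hA (CFC.sqrt_nonneg B)).posSemidef.trace_nonneg

lemma Matrix.trace_mul_le_trace {S P : Matrix n n ℂ} (hS : S ≤ 1) (hP : 0 ≤ P) :
    (S * P).trace ≤ P.trace := by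
  simpa [sub_mul, trace_sub] using trace_mul_nonneg (sub_nonneg.2 hS) hP

/-- `S = sign (P - Q)` satisfies `-1 ≤ S ≤ 1` and `S (P - Q) = |P - Q|`, so
`‖P - Q‖₁ = tr (S P) - tr (S Q) ≤ tr P + tr Q`. -/
lemma traceNorm_sub_le {P Q : Matrix n n ℂ} (hP : P.PosSemidef) (hQ : Q.PosSemidef) :
    traceNorm (P - Q) ≤ P.trace.re + Q.trace.re := by
  have hX : IsSelfAdjoint (P - Q) := hP.1.sub hQ.1
  set S := cfc (fun x : ℝ => (SignType.sign x : ℝ)) (P - Q)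
  have hcont : ContinuousOn (fun x : ℝ => (SignType.sign x : ℝ)) (spectrum ℝ (P - Q)) :=
    (P - Q).finite_real_spectrum.continuousOn _
  have habs : CFC.abs (P - Q) = S * (P - Q) := by
    rw [CFC.abs_eq_cfc_norm (P - Q) hX]
    conv_rhs => rw [← cfc_id' ℝ (P - Q)]
    rw [← cfc_mul _ _ _ hcont]
    simp [Real.norm_eq_abs, ← self_mul_sign, mul_comm]
  have hsign (x : ℝ) : -1 ≤ (SignType.sign x : ℝ) ∧ (SignType.sign x : ℝ) ≤ 1 := by
    rcases lt_trichotomy x 0 with h | h | h <;> simp [h, sign_neg, sign_pos]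
  have hS : S ≤ 1 := cfc_le_one _ _ fun x _ => (hsign x).2
  have hS' : -S ≤ 1 := by
    rw [← cfc_neg]
    exact cfc_le_one _ _ fun x _ => neg_le.1 (hsign x).1
  have hSP := Complex.le_def.1 (trace_mul_le_trace hS hP.nonneg)
  have hSQ := Complex.le_def.1 (trace_mul_le_trace hS' hQ.nonneg)
  rw [hX.isHermitian.traceNorm_eq_re_trace_abs, habs, mul_sub, trace_sub, Complex.sub_re]
  simp only [neg_mul, trace_neg, Complex.neg_re] at hSQ
  linarith [hSP.1, hSQ.1]

end TraceNorm

section KrausMap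

variable {ι n m : Type*} [Fintype ι]

def krausMap [Fintype n] (A : ι → Matrix m n ℂ) (σ : Matrix n n ℂ) : Matrix m m ℂ :=
  ∑ k, A k * σ * (A k)ᴴ

variable [Fintype n] [Fintype m]

lemma Matrix.PosSemidef.krausMap (A : ι → Matrix m n ℂ) {σ : Matrix n n ℂ} (hσ : σ.PosSemidef) :
    (krausMap A σ).PosSemidef :=
  posSemidef_sum _ fun k _ => hσ.mul_mul_conjTranspose_same (A k)

lemma trace_krausMap (A : ι → Matrix m n ℂ) (σ : Matrix n n ℂ) :
    (krausMap A σ).trace = ((∑ k, (A k)ᴴ * A k) * σ).trace := by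
  simp only [krausMap, trace_sum, Finset.sum_mul, Matrix.trace_mul_cycle (A _)]

end KrausMap

section TensorExt

variable {ι n m : Type*} (F : ℕ)

lemma tensorExt_sum [Fintype ι] (Φ : ι → Matrix n n ℂ → Matrix m m ℂ)
    (ρ : Matrix (Fin F × n) (Fin F × n) ℂ) :
    tensorExt F (fun σ => ∑ k, Φ k σ) ρ = ∑ k, tensorExt F (Φ k) ρ := by
  ext p q
  simp [tensorExt, Matrix.sum_apply]

lemma tensorExt_conj [Fintype n] (A : Matrix m n ℂ) (ρ : Matrix (Fin F × n) (Fin F × n) ℂ) :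
    tensorExt F (fun σ => A * σ * Aᴴ) ρ
      = ((1 : Matrix (Fin F) (Fin F) ℂ) ⊗ₖ A) * ρ * ((1 : Matrix (Fin F) (Fin F) ℂ) ⊗ₖ A)ᴴ := by
  ext p q
  simp only [tensorExt, mul_apply, Fintype.sum_prod_type, conjTranspose_apply, kroneckerMap_apply,
    one_apply, of_apply, ite_mul, one_mul, zero_mul]
  rw [Finset.sum_comm]
  simp [Finset.sum_ite_eq, apply_ite (starRingEnd ℂ)]

lemma tensorExt_krausMap [Fintype ι] [Fintype n] (A : ι → Matrix m n ℂ)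
    (ρ : Matrix (Fin F × n) (Fin F × n) ℂ) :
    tensorExt F (krausMap A) ρ = krausMap (fun k => (1 : Matrix (Fin F) (Fin F) ℂ) ⊗ₖ A k) ρ := by
  simp only [krausMap, ← tensorExt_conj]
  exact tensorExt_sum F _ ρ

lemma trace_tensorExt [Fintype n] {Φ : Matrix n n ℂ → Matrix n n ℂ} {c : ℂ}
    (hΦ : ∀ σ, (Φ σ).trace = c * σ.trace) (ρ : Matrix (Fin F × n) (Fin F × n) ℂ) :
    (tensorExt F Φ ρ).trace = c * ρ.trace := by
  calc (tensorExt F Φ ρ).trace = ∑ a, (Φ (of fun i j => ρ (a, i) (a, j))).trace := by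
        simp [trace, tensorExt, Fintype.sum_prod_type]
    _ = c * ρ.trace := by
        simp_rw [hΦ]
        simp [trace, Finset.mul_sum, Fintype.sum_prod_type]

end TensorExt

theorem diamondNorm_unnormalized_stochastic_le_general
    {d : ℕ} {K : ℕ} (ν lam : ℝ)
    (hν : ν ∈ Set.Icc (0 : ℝ) 1) (hlam : lam ∈ Set.Icc (0 : ℝ) 1)
    (B : Fin (K + 1) → Matrix (Fin d) (Fin d) ℂ)
    (hTP : ∑ k, (B k)ᴴ * B k = 1)
    (hB0 : B 0 = (Real.sqrt lam : ℂ) • (1 : Matrix (Fin d) (Fin d) ℂ))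
    (T : Matrix (Fin d) (Fin d) ℂ → Matrix (Fin d) (Fin d) ℂ)
    (hT : ∀ ρ, T ρ = ν • ∑ k, B k * ρ * (B k)ᴴ) :
    diamondNorm (fun ρ => T ρ - ρ) ≤ 1 + ν - 2 * ν * lam := by
  obtain ⟨hν0, hν1⟩ := hν
  obtain ⟨hlam0, hlam1⟩ := hlam
  set Φ := krausMap fun k : Fin K => B k.succ
  have hsplit (σ : Matrix (Fin d) (Fin d) ℂ) : krausMap B σ = lam • σ + Φ σ := by
    rw [krausMap, Fin.sum_univ_succ, hB0]
    simp [smul_smul, Real.mul_self_sqrt hlam0, Φ, krausMap]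
  have hΦ (σ) : T σ - σ = ν • Φ σ - (1 - ν * lam) • σ := by
    rw [hT, ← krausMap, hsplit]
    module
  have hΦtr (σ) : (Φ σ).trace = ((1 - lam : ℝ) : ℂ) * σ.trace := by
    have h := congrArg trace (hsplit σ)
    rw [trace_krausMap, hTP, one_mul, trace_add, trace_smul, Complex.real_smul] at h
    push_cast
    linear_combination -h
  refine Real.sSup_le ?_ (by nlinarith)
  rintro _ ⟨F, ρ, hρ, htr, rfl⟩
  have hP : (ν • tensorExt F Φ ρ).PosSemidef := by
    rw [tensorExt_krausMap]
    exact (hρ.krausMap _).smul hν0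
  have hQ : ((1 - ν * lam) • ρ).PosSemidef := hρ.smul (by nlinarith)
  calc traceNorm (tensorExt F (fun σ => T σ - σ) ρ)
      = traceNorm (ν • tensorExt F Φ ρ - (1 - ν * lam) • ρ) := by simp_rw [hΦ]; rfl
    _ ≤ (ν • tensorExt F Φ ρ).trace.re + ((1 - ν * lam) • ρ).trace.re := traceNorm_sub_le hP hQ
    _ = 1 + ν - 2 * ν * lam := by
      simp [trace_smul, trace_tensorExt F hΦtr, htr]
      ring

/-- For an unnormalized stochastic channel `T = ν T'` on `d × d` matrices,
`‖T − id‖◇ ≤ 1 + ν − 2νλ`. -/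
theorem diamondNorm_unnormalized_stochastic_le
    {d : ℕ} (hd : 0 < d) {K : ℕ} (ν lam : ℝ)
    (hν : ν ∈ Set.Icc (0 : ℝ) 1) (hlam : lam ∈ Set.Icc (0 : ℝ) 1)
    (B : Fin (K + 1) → Matrix (Fin d) (Fin d) ℂ)
    (hTP : ∑ k, (B k)ᴴ * B k = 1)
    (hOrth : ∀ k l, k ≠ l → ((B k)ᴴ * B l).trace = 0)
    (hB0 : B 0 = (Real.sqrt lam : ℂ) • (1 : Matrix (Fin d) (Fin d) ℂ))
    (T : Matrix (Fin d) (Fin d) ℂ → Matrix (Fin d) (Fin d) ℂ)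
    (hT : ∀ ρ, T ρ = ν • ∑ k, B k * ρ * (B k)ᴴ) :
    diamondNorm (fun ρ => T ρ - ρ) ≤ 1 + ν - 2 * ν * lam :=
  diamondNorm_unnormalized_stochastic_le_general ν lam hν hlam B hTP hB0 T hT
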